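/- arXiv:1203.5762 — 4 statements merged into one kernel-verified Lean document; each statement's English description precedes it below -/
import Mathlib

section
/- Define the modified Bessel function of order zero by I₀(y) = (1/(2π)) ∫_{−π}^{π} exp(y·cos θ) dθ for y ∈ ℝ, and the first-order Marcum Q function by Q₁(α, β) = ∫_{β}^{∞} x · exp(−(x² + α²)/2) · I₀(α·x) dx for α ≥ 0, β ≥ 0. Then for all real r > 0, c₀ > 0 and every complex number h_c, ∫_{{h ∈ ℂ : |h| ≥ c₀}} exp(−r·|h − h_c|²) dh = (π/r) · Q₁(√(2r)·|h_c|, √(2r)·c₀). -/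
open MeasureTheory Set

/-- The modified Bessel function of order zero:
`I₀(y) = (1/(2π)) ∫_{−π}^{π} exp(y cos θ) dθ`. -/
noncomputable def besselI0 (y : ℝ) : ℝ :=
  (1 / (2 * Real.pi)) * ∫ θ in (-Real.pi)..Real.pi, Real.exp (y * Real.cos θ)

/-- The first-order Marcum Q function:
`Q₁(α, β) = ∫_{β}^{∞} x exp(−(x² + α²)/2) I₀(α x) dx`. -/
noncomputable def marcumQ1 (α β : ℝ) : ℝ :=
  ∫ x in Set.Ioi β, x * Real.exp (-(x ^ 2 + α ^ 2) / 2) * besselI0 (α * x)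

/-!
Pass to polar coordinates `h = ρ e^{iθ}` around the origin. By the law of cosines
`|h - h_c|² = ρ² + |h_c|² - 2ρ|h_c| cos(θ - arg h_c)`, so by periodicity the angular integral of
the Gaussian is `2π e^{-r(ρ² + |h_c|²)} I₀(2r|h_c|ρ)`. The remaining radial integral over
`ρ > c₀` is the integral defining `Q₁` after the substitution `x = √(2r) ρ`.
-/

open Real

section PolarCoord

variable {E : Type*} [NormedAddCommGroup E] [NormedSpace ℝ E]

theorem integrableOn_polarCoord_target_of_integrable {g : ℝ × ℝ → E} (hg : Integrable g) :
    IntegrableOn (fun p : ℝ × ℝ => p.1 • g (polarCoord.symm p)) polarCoord.target := by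
  refine ((integrableOn_image_iff_integrableOn_abs_det_fderiv_smul volume
    polarCoord.open_target.measurableSet
    (fun p _ => (hasFDerivAt_polarCoord_symm p).hasFDerivWithinAt)
    polarCoord.symm.injOn g).mp hg.integrableOn).congr_fun (fun p hp => ?_)
    polarCoord.open_target.measurableSet
  have hρ : 0 < p.1 := hp.1
  simp only [det_fderivPolarCoordSymm, abs_of_pos hρ]

theorem Complex.integrableOn_polarCoord_target_of_integrable {f : ℂ → E} (hf : Integrable f) :
    IntegrableOn (fun p : ℝ × ℝ => p.1 • f (Complex.polarCoord.symm p)) polarCoord.target :=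
  _root_.integrableOn_polarCoord_target_of_integrable
    ((Complex.volume_preserving_equiv_real_prod.symm.integrable_comp_emb
      Complex.measurableEquivRealProd.symm.measurableEmbedding).mpr hf)

theorem Complex.integral_eq_integral_Ioi_integral_Ioo_polarCoord_symm {f : ℂ → E}
    (hf : Integrable f) :
    ∫ z, f z = ∫ ρ in Ioi 0, ρ • ∫ θ in Ioo (-π) π, f (Complex.polarCoord.symm (ρ, θ)) := by
  rw [← Complex.integral_comp_polarCoord_symm, polarCoord_target, Measure.volume_eq_prod,
    setIntegral_prod _ (Complex.integrableOn_polarCoord_target_of_integrable hf)]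
  simp_rw [integral_smul]

theorem Complex.setIntegral_le_norm_eq_integral_Ioi_integral_Ioo {f : ℂ → E} {c : ℝ}
    (hc : 0 ≤ c) (hf : Integrable f) :
    ∫ z in {z : ℂ | c ≤ ‖z‖}, f z =
      ∫ ρ in Ioi c, ρ • ∫ θ in Ioo (-π) π, f (Complex.polarCoord.symm (ρ, θ)) := by
  have hS : MeasurableSet {z : ℂ | c ≤ ‖z‖} := measurableSet_le measurable_const measurable_norm
  rw [← integral_indicator hS,
    Complex.integral_eq_integral_Ioi_integral_Ioo_polarCoord_symm (hf.indicator hS)]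
  have hpolar : ∀ ρ ∈ Ioi (0 : ℝ), ρ • ∫ θ in Ioo (-π) π,
      {z : ℂ | c ≤ ‖z‖}.indicator f (Complex.polarCoord.symm (ρ, θ)) =
      (Ici c).indicator (fun ρ => ρ • ∫ θ in Ioo (-π) π, f (Complex.polarCoord.symm (ρ, θ))) ρ :=
    fun ρ (hρ : 0 < ρ) => by by_cases hcρ : c ≤ ρ <;> simp [hcρ, abs_of_pos hρ]
  rw [setIntegral_congr_fun measurableSet_Ioi hpolar, setIntegral_indicator measurableSet_Ici]
  refine setIntegral_congr_set ?_
  have hae := (Ioi_ae_eq_Ici (μ := volume) (a := (0 : ℝ))).inter (ae_eq_refl (Ici c))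
  rw [Ici_inter_Ici, max_eq_right hc] at hae
  exact hae.trans Ioi_ae_eq_Ici.symm

end PolarCoord

theorem norm_polarCoord_symm_sub_sq (w : ℂ) (ρ θ : ℝ) :
    ‖Complex.polarCoord.symm (ρ, θ) - w‖ ^ 2 =
      ρ ^ 2 + ‖w‖ ^ 2 - 2 * ρ * ‖w‖ * cos (θ - w.arg) := by
  have hre : ‖w‖ * cos w.arg = w.re := Complex.norm_mul_cos_arg w
  have him : ‖w‖ * sin w.arg = w.im := Complex.norm_mul_sin_arg w
  have hw : ‖w‖ ^ 2 = w.re ^ 2 + w.im ^ 2 := by rw [Complex.sq_norm, Complex.normSq_apply]; ring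
  rw [Complex.sq_norm, Complex.normSq_apply, cos_sub]
  simp only [Complex.polarCoord_symm_apply, Complex.sub_re, Complex.sub_im,
    Complex.add_re, Complex.add_im, Complex.mul_re, Complex.mul_im,
    Complex.ofReal_re, Complex.ofReal_im, Complex.I_re, Complex.I_im]
  linear_combination ρ ^ 2 * sin_sq_add_cos_sq θ + 2 * ρ * cos θ * hre + 2 * ρ * sin θ * him - hw

theorem integral_Ioo_exp_mul_cos_sub (c φ : ℝ) :
    ∫ θ in Ioo (-π) π, exp (c * cos (θ - φ)) = 2 * π * besselI0 c := by
  have hper : Function.Periodic (fun θ => exp (c * cos θ)) (2 * π) := fun θ => by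
    simp [cos_periodic θ]
  rw [← integral_Ioc_eq_integral_Ioo, ← intervalIntegral.integral_of_le (by linarith [pi_pos]),
    intervalIntegral.integral_comp_sub_right (fun θ => exp (c * cos θ)),
    show π - φ = -π - φ + 2 * π by ring, hper.intervalIntegral_add_eq (-π - φ) (-π), besselI0]
  field_simp
  ring_nf

theorem integrable_exp_neg_mul_norm_sub_sq {V : Type*} [NormedAddCommGroup V]
    [InnerProductSpace ℝ V] [FiniteDimensional ℝ V] [MeasurableSpace V] [BorelSpace V]
    {r : ℝ} (hr : 0 < r) (w : V) :
    Integrable (fun v : V => exp (-r * ‖v - w‖ ^ 2)) := by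
  have := (GaussianFourier.integrable_cexp_neg_mul_sq_norm_add (V := V) (b := r)
    (by simpa using hr) 0 0).norm.comp_sub_right w
  refine this.congr (ae_of_all _ fun v => ?_)
  simp [Complex.norm_exp, ← Complex.ofReal_pow]

theorem integral_Ioo_exp_neg_mul_norm_polarCoord_symm_sub_sq (r ρ : ℝ) (w : ℂ) :
    ∫ θ in Ioo (-π) π, exp (-r * ‖Complex.polarCoord.symm (ρ, θ) - w‖ ^ 2) =
      2 * π * exp (-r * (ρ ^ 2 + ‖w‖ ^ 2)) * besselI0 (2 * r * ‖w‖ * ρ) := by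
  have hsplit : ∀ θ, exp (-r * ‖Complex.polarCoord.symm (ρ, θ) - w‖ ^ 2) =
      exp (-r * (ρ ^ 2 + ‖w‖ ^ 2)) * exp (2 * r * ‖w‖ * ρ * cos (θ - w.arg)) := fun θ => by
    rw [norm_polarCoord_symm_sub_sq, ← exp_add]; ring_nf
  simp_rw [hsplit, integral_const_mul, integral_Ioo_exp_mul_cos_sub]
  ring

theorem marcumQ1_sqrt_mul_sqrt_mul {r : ℝ} (hr : 0 < r) (α β : ℝ) :
    marcumQ1 (√(2 * r) * α) (√(2 * r) * β) =
      2 * r * ∫ x in Ioi β, x * exp (-r * (x ^ 2 + α ^ 2)) * besselI0 (2 * r * α * x) := by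
  set s := √(2 * r)
  have hs : 0 < s := by positivity
  have hs2 : s ^ 2 = 2 * r := Real.sq_sqrt (by positivity)
  rw [marcumQ1, ← integral_comp_mul_left_Ioi' _ β hs, smul_eq_mul, ← integral_const_mul,
    ← integral_const_mul]
  congr 1 with x
  rw [show -((s * x) ^ 2 + (s * α) ^ 2) / 2 = -r * (x ^ 2 + α ^ 2) by
      linear_combination (-(x ^ 2 + α ^ 2) / 2) * hs2,
    show s * α * (s * x) = 2 * r * α * x by linear_combination α * x * hs2]
  linear_combination x * exp (-r * (x ^ 2 + α ^ 2)) * besselI0 (2 * r * α * x) * hs2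

/-- closed form of the exterior Gaussian integral via the Marcum Q
function, Lemma 1 of the paper with the corrected constant `π/r`. -/
theorem exterior_gaussian_integral_eq_marcumQ1
    (r c₀ : ℝ) (hr : 0 < r) (hc₀ : 0 < c₀) (h_c : ℂ) :
    (∫ h in {h : ℂ | c₀ ≤ ‖h‖},
        Real.exp (-r * (‖h - h_c‖) ^ 2)) =
      (Real.pi / r) *
        marcumQ1 (Real.sqrt (2 * r) * ‖h_c‖) (Real.sqrt (2 * r) * c₀) := by
  rw [Complex.setIntegral_le_norm_eq_integral_Ioi_integral_Ioo hc₀.le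
      (integrable_exp_neg_mul_norm_sub_sq hr h_c), marcumQ1_sqrt_mul_sqrt_mul hr,
    ← mul_assoc, show π / r * (2 * r) = 2 * π by field_simp, ← integral_const_mul]
  simp_rw [smul_eq_mul, integral_Ioo_exp_neg_mul_norm_polarCoord_symm_sub_sq]
  congr 1 with ρ
  ring
end

section
/- For all real r > 0 and c₀ > 0 and every complex number h_c with |h_c| < c₀, the following upper bound holds: ∫_{{h ∈ ℂ : |h| ≥ c₀}} exp(−r·|h − h_c|²) dh ≤ (π/r) · (c₀/(c₀ − |h_c|)) · exp(−r·(c₀ − |h_c|)²). -/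
/-!
Outside the disc of radius `c₀ > |h_c|` the reverse triangle inequality gives
`|h - h_c| ≥ |h| - |h_c| ≥ 0`, so the integrand is dominated by the radial function
`exp (-r (|h| - |h_c|)²)`. In polar coordinates its integral is
`2π ∫_{c₀}^∞ ρ exp (-r (ρ - |h_c|)²) dρ`, and for `ρ ≥ c₀` the weight `ρ` is at most
`c₀ / (c₀ - |h_c|) · (ρ - |h_c|)`, which turns the integrand into an exact derivative.
-/

open MeasureTheory Set Real Filter Topology

lemma le_div_sub_mul_sub {a c x : ℝ} (ha : 0 ≤ a) (hac : a < c) (hcx : c ≤ x) :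
    x ≤ c / (c - a) * (x - a) := by
  rw [div_mul_eq_mul_div, le_div_iff₀ (sub_pos.2 hac)]
  nlinarith

lemma exp_neg_mul_sq_norm_sub_le {E : Type*} [SeminormedAddCommGroup E] {r : ℝ} (hr : 0 ≤ r)
    {z w : E} (h : ‖w‖ ≤ ‖z‖) : exp (-r * ‖z - w‖ ^ 2) ≤ exp (-r * (‖z‖ - ‖w‖) ^ 2) := by
  have := pow_le_pow_left₀ (sub_nonneg.2 h) (norm_sub_norm_le z w) 2
  rw [exp_le_exp]
  nlinarith

section Gaussian

variable {b : ℝ} (hb : 0 < b) (a : ℝ)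
include hb

lemma integrable_mul_exp_neg_mul_sq_sub : Integrable fun x : ℝ => x * exp (-b * (x - a) ^ 2) := by
  have h := ((integrable_mul_exp_neg_mul_sq hb).comp_sub_right a).add
    (((integrable_exp_neg_mul_sq hb).comp_sub_right a).const_mul a)
  refine h.congr (.of_forall fun x => ?_)
  simp only [Pi.add_apply]
  ring

lemma integral_Ioi_sub_mul_exp_neg_mul_sq_sub (c : ℝ) :
    ∫ x in Ioi c, (x - a) * exp (-b * (x - a) ^ 2) = exp (-b * (c - a) ^ 2) / (2 * b) := by
  have hderiv (x : ℝ) : HasDerivAt (fun x => -exp (-b * (x - a) ^ 2) / (2 * b))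
      ((x - a) * exp (-b * (x - a) ^ 2)) x := by
    refine ((((hasDerivAt_id' x).sub_const a).pow 2).const_mul (-b)).exp.neg.div_const (2 * b)
      |>.congr_deriv ?_
    simp only [Pi.pow_apply]
    field_simp
    ring
  have hlim : Tendsto (fun x => -exp (-b * (x - a) ^ 2) / (2 * b)) atTop (𝓝 (-0 / (2 * b))) :=
    ((tendsto_exp_atBot.comp (((tendsto_pow_atTop two_ne_zero).comp
      (tendsto_atTop_add_const_right _ (-a) tendsto_id)).const_mul_atTop_of_neg
        (neg_lt_zero.2 hb))).neg).div_const _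
  rw [integral_Ioi_of_hasDerivAt_of_tendsto' (fun x _ => hderiv x)
    ((integrable_mul_exp_neg_mul_sq hb).comp_sub_right a).integrableOn hlim]
  ring

lemma integral_Ioi_mul_exp_neg_mul_sq_sub_le {c : ℝ} (ha : 0 ≤ a) (hac : a < c) :
    ∫ x in Ioi c, x * exp (-b * (x - a) ^ 2) ≤
      c / (c - a) * (exp (-b * (c - a) ^ 2) / (2 * b)) := by
  rw [← integral_Ioi_sub_mul_exp_neg_mul_sq_sub hb, ← integral_const_mul]
  refine setIntegral_mono_on (integrable_mul_exp_neg_mul_sq_sub hb a).integrableOn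
    (((integrable_mul_exp_neg_mul_sq hb).comp_sub_right a).const_mul _).integrableOn
    measurableSet_Ioi fun x hx => ?_
  rw [← mul_assoc]
  exact mul_le_mul_of_nonneg_right (le_div_sub_mul_sub ha hac (le_of_lt hx)) (exp_pos _).le

end Gaussian

lemma indicator_le_norm_fun_norm {E β : Type*} [SeminormedAddCommGroup E] [Zero β]
    (f : ℝ → β) (c : ℝ) :
    {x : E | c ≤ ‖x‖}.indicator (fun x => f ‖x‖) = fun x => (Ici c).indicator f ‖x‖ := by
  ext x
  simp [indicator_apply]

lemma Ioi_zero_inter_Ici_ae_eq {c : ℝ} (hc : 0 ≤ c) : (Ioi 0 ∩ Ici c : Set ℝ) =ᵐ[volume] Ioi c := by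
  have := (ae_eq_refl (Ioi (0 : ℝ))).inter (Ioi_ae_eq_Ici (μ := volume) (a := c)).symm
  rwa [inter_eq_right.2 (Ioi_subset_Ioi hc)] at this

namespace Complex

variable {F : Type*} [NormedAddCommGroup F] [NormedSpace ℝ F]

theorem integral_fun_norm (f : ℝ → F) :
    ∫ z : ℂ, f ‖z‖ = (2 * π) • ∫ y in Ioi (0 : ℝ), y • f y := by
  rw [integral_fun_norm_addHaar, finrank_real_complex, measureReal_def, Complex.volume_ball,
    ENNReal.toReal_mul]
  simp only [ENNReal.toReal_pow, ENNReal.toReal_ofReal zero_le_one, one_pow, one_mul,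
    ENNReal.coe_toReal, NNReal.coe_real_pi, ← Nat.cast_smul_eq_nsmul ℝ, smul_smul]
  norm_num

theorem integrable_fun_norm {f : ℝ → F} :
    Integrable (fun z : ℂ => f ‖z‖) ↔ IntegrableOn (fun y => y • f y) (Ioi 0) := by
  simp [integrable_fun_norm_addHaar, finrank_real_complex]

theorem setIntegral_le_norm_fun_norm (f : ℝ → F) {c : ℝ} (hc : 0 ≤ c) :
    ∫ z in {z : ℂ | c ≤ ‖z‖}, f ‖z‖ = (2 * π) • ∫ y in Ioi c, y • f y := by
  rw [← integral_indicator (measurableSet_le measurable_const measurable_norm),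
    indicator_le_norm_fun_norm, integral_fun_norm]
  simp_rw [← indicator_smul_apply (Ici c) (fun y : ℝ => y) f]
  rw [setIntegral_indicator measurableSet_Ici, setIntegral_congr_set (Ioi_zero_inter_Ici_ae_eq hc)]

theorem integrableOn_le_norm_fun_norm {f : ℝ → F} {c : ℝ} (hc : 0 ≤ c) :
    IntegrableOn (fun z : ℂ => f ‖z‖) {z | c ≤ ‖z‖} ↔ IntegrableOn (fun y => y • f y) (Ioi c) := by
  rw [← integrable_indicator_iff (measurableSet_le measurable_const measurable_norm),
    indicator_le_norm_fun_norm, integrable_fun_norm]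
  simp_rw [← indicator_smul_apply (Ici c) (fun y : ℝ => y) f]
  rw [integrableOn_indicator_iff measurableSet_Ici, inter_comm,
    integrableOn_congr_set_ae (Ioi_zero_inter_Ici_ae_eq hc)]

end Complex

theorem exterior_gaussian_integral_le_general
    (r c₀ : ℝ) (hr : 0 < r) (h_c : ℂ) (hhc : ‖h_c‖ < c₀) :
    (∫ h in {h : ℂ | c₀ ≤ ‖h‖},
        Real.exp (-r * (‖h - h_c‖) ^ 2)) ≤
      (Real.pi / r) * (c₀ / (c₀ - ‖h_c‖)) *
        Real.exp (-r * (c₀ - ‖h_c‖) ^ 2) := by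
  set a := ‖h_c‖
  have ha : 0 ≤ a := norm_nonneg h_c
  have hc₀ : 0 ≤ c₀ := ha.trans hhc.le
  have hS : MeasurableSet {h : ℂ | c₀ ≤ ‖h‖} := measurableSet_le measurable_const measurable_norm
  set g : ℝ → ℝ := fun x => exp (-r * (x - a) ^ 2)
  calc (∫ h in {h : ℂ | c₀ ≤ ‖h‖}, exp (-r * ‖h - h_c‖ ^ 2))
      ≤ ∫ h in {h : ℂ | c₀ ≤ ‖h‖}, g ‖h‖ :=
        integral_mono_of_nonneg (.of_forall fun h => (exp_pos _).le)
          ((Complex.integrableOn_le_norm_fun_norm hc₀).2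
            (integrable_mul_exp_neg_mul_sq_sub hr a).integrableOn)
          ((ae_restrict_iff' hS).2 (.of_forall fun h hh =>
            exp_neg_mul_sq_norm_sub_le hr.le (hhc.le.trans hh)))
    _ = 2 * π * ∫ x in Ioi c₀, x * g x := Complex.setIntegral_le_norm_fun_norm g hc₀
    _ ≤ 2 * π * (c₀ / (c₀ - a) * (exp (-r * (c₀ - a) ^ 2) / (2 * r))) := by
        gcongr
        exact integral_Ioi_mul_exp_neg_mul_sq_sub_le hr a ha hhc
    _ = π / r * (c₀ / (c₀ - a)) * exp (-r * (c₀ - a) ^ 2) := by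
        field_simp

/-- tail upper bound of Lemma 1 of the paper, with the corrected
constant `π/r`: for `r > 0`, `c₀ > 0` and `|h_c| < c₀`,
`∫_{|h| ≥ c₀} exp(−r|h − h_c|²) dh ≤ (π/r) (c₀/(c₀ − |h_c|)) exp(−r(c₀ − |h_c|)²)`. -/
theorem exterior_gaussian_integral_le
    (r c₀ : ℝ) (hr : 0 < r) (hc₀ : 0 < c₀) (h_c : ℂ) (hhc : ‖h_c‖ < c₀) :
    (∫ h in {h : ℂ | c₀ ≤ ‖h‖},
        Real.exp (-r * (‖h - h_c‖) ^ 2)) ≤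
      (Real.pi / r) * (c₀ / (c₀ - ‖h_c‖)) *
        Real.exp (-r * (c₀ - ‖h_c‖) ^ 2) :=
  exterior_gaussian_integral_le_general r c₀ hr h_c hhc
end

section
/- Define the modified Bessel function of order zero by I₀(y) = (1/(2π)) ∫_{−π}^{π} exp(y·cos θ) dθ for y ∈ ℝ, and the first-order Marcum Q function by Q₁(α, β) = ∫_{β}^{∞} x · exp(−(x² + α²)/2) · I₀(α·x) dx. Then for all real numbers α, β with 0 ≤ α < β, Q₁(α, β) ≤ (β/(β − α)) · exp(−(β − α)²/2). -/
open MeasureTheory Set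

/-!
Since `I₀(y) ≤ e^{|y|}`, completing the square gives, for `x > β > α ≥ 0`, that the integrand of
`Q₁(α, β)` is at most `x e^{-(x-α)²/2} ≤ (β/(β-α)) (x-α) e^{-(x-α)²/2}`, because `x/(x-α)` decreases
in `x`. The last function has the explicit antiderivative `-e^{-(x-α)²/2}`, whose increment from
`β` to `∞` is `e^{-(β-α)²/2}`.
-/

open Real Filter Topology

lemma besselI0_nonneg (y : ℝ) : 0 ≤ besselI0 y := by
  unfold besselI0
  exact mul_nonneg (by positivity)
    (intervalIntegral.integral_nonneg (by linarith [pi_pos]) fun θ _ => (exp_pos _).le)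

lemma besselI0_le_exp_abs (y : ℝ) : besselI0 y ≤ exp |y| := by
  have hπ := pi_pos
  have hexp_le : ∀ θ, exp (y * cos θ) ≤ exp |y| := fun θ => exp_le_exp.2 <|
    calc y * cos θ ≤ |y * cos θ| := le_abs_self _
      _ = |y| * |cos θ| := abs_mul _ _
      _ ≤ |y| := mul_le_of_le_one_right (abs_nonneg _) (abs_cos_le_one θ)
  have hint : ∫ θ in (-π)..π, exp (y * cos θ) ≤ ∫ _ in (-π)..π, exp |y| :=
    intervalIntegral.integral_mono_on (by linarith)
      ((continuous_exp.comp (continuous_const.mul continuous_cos)).intervalIntegrable _ _)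
      intervalIntegrable_const fun θ _ => hexp_le θ
  calc besselI0 y ≤ 1 / (2 * π) * ((π - -π) * exp |y|) := by
        rw [intervalIntegral.integral_const, smul_eq_mul] at hint
        exact mul_le_mul_of_nonneg_left hint (by positivity)
    _ = exp |y| := by field_simp; ring

lemma hasDerivAt_neg_exp_neg_sub_sq_div_two (c x : ℝ) :
    HasDerivAt (fun x => -exp (-(x - c) ^ 2 / 2)) ((x - c) * exp (-(x - c) ^ 2 / 2)) x := by
  have hexponent : HasDerivAt (fun x => -(x - c) ^ 2 / 2) (-(x - c)) x := by
    refine ((((hasDerivAt_id x).sub_const c).pow 2).neg.div_const 2).congr_deriv ?_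
    simp only [id_eq]
    ring
  exact hexponent.exp.neg.congr_deriv (by ring)

lemma tendsto_neg_exp_neg_sub_sq_div_two (c : ℝ) :
    Tendsto (fun x => -exp (-(x - c) ^ 2 / 2)) atTop (𝓝 0) := by
  have hsq : Tendsto (fun x : ℝ => (x - c) ^ 2) atTop atTop :=
    (tendsto_pow_atTop two_ne_zero).comp (tendsto_atTop_add_const_right _ _ tendsto_id)
  have hexponent : Tendsto (fun x : ℝ => -(x - c) ^ 2 / 2) atTop atBot := by
    simpa only [neg_div, ← div_neg] using hsq.atTop_div_const_of_neg (by norm_num : (-2 : ℝ) < 0)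
  simpa using (tendsto_exp_atBot.comp hexponent).neg

section GaussianTail

variable {c β : ℝ}

lemma integrableOn_Ioi_sub_mul_exp_neg_sub_sq_div_two (hcβ : c ≤ β) :
    IntegrableOn (fun x => (x - c) * exp (-(x - c) ^ 2 / 2)) (Ioi β) :=
  integrableOn_Ioi_deriv_of_nonneg' (fun x _ => hasDerivAt_neg_exp_neg_sub_sq_div_two c x)
    (fun x hx => mul_nonneg (by linarith [mem_Ioi.1 hx]) (exp_pos _).le)
    (tendsto_neg_exp_neg_sub_sq_div_two c)

lemma integral_Ioi_sub_mul_exp_neg_sub_sq_div_two (hcβ : c ≤ β) :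
    ∫ x in Ioi β, (x - c) * exp (-(x - c) ^ 2 / 2) = exp (-(β - c) ^ 2 / 2) := by
  rw [integral_Ioi_of_hasDerivAt_of_nonneg'
    (fun x _ => hasDerivAt_neg_exp_neg_sub_sq_div_two c x)
    (fun x hx => mul_nonneg (by linarith [mem_Ioi.1 hx]) (exp_pos _).le)
    (tendsto_neg_exp_neg_sub_sq_div_two c)]
  ring

end GaussianTail

section Integrand

variable {α β x : ℝ}

lemma marcumQ1_integrand_nonneg (hx : 0 ≤ x) :
    0 ≤ x * exp (-(x ^ 2 + α ^ 2) / 2) * besselI0 (α * x) :=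
  mul_nonneg (by positivity) (besselI0_nonneg _)

lemma marcumQ1_integrand_le (hα : 0 ≤ α) (hαβ : α < β) (hβx : β ≤ x) :
    x * exp (-(x ^ 2 + α ^ 2) / 2) * besselI0 (α * x)
      ≤ β / (β - α) * ((x - α) * exp (-(x - α) ^ 2 / 2)) := by
  have hx : 0 ≤ x := by linarith
  have hI0 : besselI0 (α * x) ≤ exp (α * x) := by
    simpa [abs_of_nonneg (mul_nonneg hα hx)] using besselI0_le_exp_abs (α * x)
  have hratio : x ≤ β / (β - α) * (x - α) := by
    rw [div_mul_eq_mul_div, le_div_iff₀ (by linarith)]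
    nlinarith
  calc x * exp (-(x ^ 2 + α ^ 2) / 2) * besselI0 (α * x)
      ≤ x * exp (-(x ^ 2 + α ^ 2) / 2) * exp (α * x) := by gcongr
    _ = x * exp (-(x - α) ^ 2 / 2) := by rw [mul_assoc, ← exp_add]; ring_nf
    _ ≤ β / (β - α) * (x - α) * exp (-(x - α) ^ 2 / 2) := by gcongr
    _ = β / (β - α) * ((x - α) * exp (-(x - α) ^ 2 / 2)) := by ring

end Integrand

/-- Simon–Alouini bound on the first-order Marcum Q function:
for `0 ≤ α < β`, `Q₁(α, β) ≤ (β/(β − α)) exp(−(β − α)²/2)`. -/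
theorem marcumQ1_le (α β : ℝ) (hα : 0 ≤ α) (hαβ : α < β) :
    marcumQ1 α β ≤ (β / (β - α)) * Real.exp (-(β - α) ^ 2 / 2) := by
  have hβ : 0 ≤ β := hα.trans hαβ.le
  calc marcumQ1 α β
      ≤ ∫ x in Ioi β, β / (β - α) * ((x - α) * exp (-(x - α) ^ 2 / 2)) := by
        refine integral_mono_of_nonneg ?_
          ((integrableOn_Ioi_sub_mul_exp_neg_sub_sq_div_two hαβ.le).const_mul _) ?_
        · filter_upwards [ae_restrict_mem measurableSet_Ioi] with x hx
          exact marcumQ1_integrand_nonneg (hβ.trans (le_of_lt hx))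
        · filter_upwards [ae_restrict_mem measurableSet_Ioi] with x hx
          exact marcumQ1_integrand_le hα hαβ (le_of_lt hx)
    _ = β / (β - α) * exp (-(β - α) ^ 2 / 2) := by
        rw [integral_const_mul, integral_Ioi_sub_mul_exp_neg_sub_sq_div_two hαβ.le]
end

section
/- Let K ≥ 0 and define the Rician density on ℂ by f_K(h) = ((K+1)/π) · exp(−(K+1)·|h − √(K/(K+1))|²). Then for all a, b ∈ ℂ and every real t ≥ 0, ∫_ℂ ∫_ℂ exp(−t·|a·h_A + b·h_B|²) · f_K(h_A) · f_K(h_B) dh_A dh_B = ((K+1)/(K+1 + t·(|a|² + |b|²))) · exp(−K·t·|a + b|²/(K+1 + t·(|a|² + |b|²))). -/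
/-!
Both integrals are of the same kind: a Gaussian factor `exp (-s |w h + v|²)` against a complex
Gaussian density in `h` of precision `c` and mean `m`. Completing the square in `h` turns the
integrand into a Gaussian of precision `c + s |w|²`, and what is left is again of the form
`exp (-s' |w m + v|²)` with `s' = s c / (c + s |w|²)`. Integrating out `h_B` and then `h_A` this
way gives the formula.
-/

open MeasureTheory Set

/-- The Rician density with Rician factor `K` on `ℂ`:
`f_K(h) = ((K+1)/π) exp(−(K+1)|h − √(K/(K+1))|²)`. -/
noncomputable def ricianDensity (K : ℝ) (h : ℂ) : ℝ :=
  ((K + 1) / Real.pi) *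
    Real.exp (-(K + 1) * (‖h - (Real.sqrt (K / (K + 1)) : ℂ)‖) ^ 2)

/-- The circularly symmetric complex Gaussian density with mean `m` and variance `1 / c`. -/
noncomputable def complexGaussianDensity (c : ℝ) (m h : ℂ) : ℝ :=
  c / Real.pi * Real.exp (-c * ‖h - m‖ ^ 2)

theorem sq_norm_mul_add_add_sq_norm_sub_eq {s c : ℝ} {w : ℂ} (hL : c + s * ‖w‖ ^ 2 ≠ 0)
    (v m h : ℂ) :
    s * ‖w * h + v‖ ^ 2 + c * ‖h - m‖ ^ 2 =
      (c + s * ‖w‖ ^ 2) * ‖h - (c * m - s * (starRingEnd ℂ) w * v) / (c + s * ‖w‖ ^ 2 : ℝ)‖ ^ 2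
        + s * c / (c + s * ‖w‖ ^ 2) * ‖w * m + v‖ ^ 2 := by
  set L := c + s * ‖w‖ ^ 2 with hL_def
  have hLC : (L : ℂ) ≠ 0 := Complex.ofReal_ne_zero.mpr hL
  have hsub : h - (c * m - s * (starRingEnd ℂ) w * v) / (L : ℂ) =
      (L * h - (c * m - s * (starRingEnd ℂ) w * v)) / L := by field_simp
  rw [hsub, norm_div, Complex.norm_real, Real.norm_eq_abs, div_pow, sq_abs]
  field_simp
  simp only [Complex.sq_norm, Complex.normSq_apply, hL_def, Complex.mul_re, Complex.mul_im,
    Complex.add_re, Complex.add_im, Complex.sub_re, Complex.sub_im, Complex.ofReal_re,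
    Complex.ofReal_im, Complex.conj_re, Complex.conj_im]
  ring

theorem integral_rexp_neg_mul_sq_norm_sub {V : Type*} [NormedAddCommGroup V]
    [InnerProductSpace ℝ V] [FiniteDimensional ℝ V] [MeasurableSpace V] [BorelSpace V]
    {b : ℝ} (hb : 0 < b) (q : V) :
    ∫ v : V, Real.exp (-b * ‖v - q‖ ^ 2) = (Real.pi / b) ^ (Module.finrank ℝ V / 2 : ℝ) := by
  rw [integral_sub_right_eq_self (fun v => Real.exp (-b * ‖v‖ ^ 2)) q,
    GaussianFourier.integral_rexp_neg_mul_sq_norm hb]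

theorem integral_complexGaussianDensity_mul_exp {s c : ℝ} (hs : 0 ≤ s) (hc : 0 < c)
    (w v m : ℂ) :
    ∫ h, Real.exp (-s * ‖w * h + v‖ ^ 2) * complexGaussianDensity c m h =
      c / (c + s * ‖w‖ ^ 2) * Real.exp (-(s * c / (c + s * ‖w‖ ^ 2)) * ‖w * m + v‖ ^ 2) := by
  set L := c + s * ‖w‖ ^ 2
  have hL : 0 < L := by positivity
  set q : ℂ := (c * m - s * (starRingEnd ℂ) w * v) / (L : ℝ)
  have hgauss : ∫ h : ℂ, Real.exp (-L * ‖h - q‖ ^ 2) = Real.pi / L := by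
    rw [integral_rexp_neg_mul_sq_norm_sub hL, Complex.finrank_real_complex]
    norm_num
  calc ∫ h, Real.exp (-s * ‖w * h + v‖ ^ 2) * complexGaussianDensity c m h
      = ∫ h, c / Real.pi * Real.exp (-(s * c / L) * ‖w * m + v‖ ^ 2) *
          Real.exp (-L * ‖h - q‖ ^ 2) := by
        congr 1 with h
        rw [complexGaussianDensity, mul_left_comm, mul_assoc, ← Real.exp_add, ← Real.exp_add]
        congr 2
        linear_combination -(sq_norm_mul_add_add_sq_norm_sub_eq hL.ne' v m h)
    _ = c / L * Real.exp (-(s * c / L) * ‖w * m + v‖ ^ 2) := by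
        rw [integral_const_mul, hgauss]
        field_simp

theorem ricianDensity_eq_complexGaussianDensity (K : ℝ) :
    ricianDensity K = complexGaussianDensity (K + 1) (Real.sqrt (K / (K + 1))) :=
  rfl

/-- exact Chernoff-type Gaussian–Rician double integral, making
equation (8) of the paper precise: for `K ≥ 0`, `a b : ℂ` and `t ≥ 0`,
`∫∫ exp(−t|a h_A + b h_B|²) f_K(h_A) f_K(h_B) dh_A dh_B
  = ((K+1)/(K+1+t(|a|²+|b|²))) exp(−K t |a+b|²/(K+1+t(|a|²+|b|²)))`. -/
theorem rician_double_gaussian_integral (K : ℝ) (hK : 0 ≤ K) (a b : ℂ)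
    (t : ℝ) (ht : 0 ≤ t) :
    (∫ hA : ℂ, ∫ hB : ℂ,
        Real.exp (-t * (‖a * hA + b * hB‖) ^ 2) *
          ricianDensity K hA * ricianDensity K hB) =
      ((K + 1) / (K + 1 + t * ((‖a‖) ^ 2 + (‖b‖) ^ 2))) *
        Real.exp (-K * t * (‖a + b‖) ^ 2 /
          (K + 1 + t * ((‖a‖) ^ 2 + (‖b‖) ^ 2))) := by
  have hc : 0 < K + 1 := by linarith
  set m : ℝ := Real.sqrt (K / (K + 1))
  set D := K + 1 + t * ‖b‖ ^ 2
  have hD : 0 < D := by positivity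
  have inner (hA : ℂ) :
      ∫ hB, Real.exp (-t * ‖a * hA + b * hB‖ ^ 2) * ricianDensity K hA * ricianDensity K hB =
        (K + 1) / D * (Real.exp (-(t * (K + 1) / D) * ‖a * hA + b * m‖ ^ 2) *
          complexGaussianDensity (K + 1) m hA) := by
    simp_rw [ricianDensity_eq_complexGaussianDensity,
      mul_right_comm _ (complexGaussianDensity _ _ hA)]
    rw [integral_mul_const]
    simp_rw [add_comm (a * hA)]
    rw [integral_complexGaussianDensity_mul_exp ht hc]
    ring
  have hnorm : ‖a * m + b * m‖ ^ 2 = K / (K + 1) * ‖a + b‖ ^ 2 := by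
    rw [← add_mul, norm_mul, mul_pow, Complex.norm_real, Real.norm_eq_abs, sq_abs,
      Real.sq_sqrt (by positivity), mul_comm]
  have hprecision :
      K + 1 + t * (K + 1) / D * ‖a‖ ^ 2 = (K + 1) * (K + 1 + t * (‖a‖ ^ 2 + ‖b‖ ^ 2)) / D := by
    field_simp
    ring
  simp_rw [inner]
  rw [integral_const_mul, integral_complexGaussianDensity_mul_exp (by positivity) hc, hnorm,
    hprecision]
  field_simp
end
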